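/- Let (X,0) ⊂ (ℂ^3,0) be the Whitney umbrella {z_1² − z_2 z_3² = 0} and φ the arc t ↦ (0, t, 0). Then for every i ≥ 1, every arc ψ on (X,0) with ord(ψ − φ) > i has image contained in the singular locus {z_1 = z_3 = 0}; hence the ball B_{X,i}(φ) does not meet R_{(X,0)}, the set of arcs on X not contained in Sing(X). In particular R_{(X,0)} is not dense in A_{(X,0)}. -/

import Mathlib

/- Write `ψ = (ψ₁, ψ₂, ψ₃)`. Since `ψ₂` agrees with `t` to order `> i ≥ 1`, `ord ψ₂ = 1`.
Comparing orders in `ψ₁² = ψ₂ ψ₃²`, the left side has even order and the right side, unless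
`ψ₃ = 0`, odd order; hence `ψ₃ = 0` and then `ψ₁ = 0`. -/

open scoped Classical

noncomputable def pOrd (g : PowerSeries ℂ) : ℕ∞ :=
  ⨅ (N : ℕ) (_ : PowerSeries.coeff N g ≠ 0), (N : ℕ∞)

noncomputable def aOrd {n : ℕ} (φ ψ : Fin n → PowerSeries ℂ) : ℕ∞ :=
  ⨅ j : Fin n, pOrd (φ j - ψ j)

/-- The arc `φ : t ↦ (0, t, 0)` on the Whitney umbrella. -/
noncomputable def umbrellaArc : Fin 3 → PowerSeries ℂ :=
  ![0, PowerSeries.X, 0]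

open PowerSeries

theorem pOrd_eq_order (g : PowerSeries ℂ) : pOrd g = g.order := by
  refine le_antisymm ?_ (le_iInf₂ fun N hN => order_le N hN)
  by_cases hg : g = 0
  · simp [hg]
  · rw [pOrd, ← coe_toNat_order hg]
    exact iInf_le_of_le _ (iInf_le _ (coeff_order hg))

theorem aOrd_le_order_sub {n : ℕ} (φ ψ : Fin n → PowerSeries ℂ) (j : Fin n) :
    aOrd φ ψ ≤ (φ j - ψ j).order := by
  rw [← pOrd_eq_order]
  exact iInf_le (fun j => pOrd (φ j - ψ j)) j

theorem PowerSeries.order_eq_one_of_one_lt_order_sub_X {R : Type*} [Ring R] [Nontrivial R]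
    {f : R⟦X⟧} (h : 1 < (f - X).order) : f.order = 1 := by
  have hsum := order_add_of_order_ne X (f - X) (by rw [order_X]; exact h.ne)
  rwa [add_sub_cancel, order_X, min_eq_left h.le] at hsum

theorem PowerSeries.eq_zero_of_sq_eq_mul_sq {R : Type*} [Semiring R] [NoZeroDivisors R]
    [Nontrivial R] {a u b : R⟦X⟧} (hu : u.order = 1) (h : a ^ 2 = u * b ^ 2) :
    a = 0 ∧ b = 0 := by
  have hb : b = 0 := by
    by_contra hb
    have hord := congrArg order h
    rw [order_pow, order_mul, order_pow, hu, ← coe_toNat_order hb, nsmul_eq_mul,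
      nsmul_eq_mul] at hord
    generalize a.order = k at hord
    induction k using ENat.recTopCoe with
    | top => exact ENat.top_ne_natCast _ (by exact_mod_cast hord)
    | coe m =>
      have hpar : 2 * m = 1 + 2 * b.order.toNat := by exact_mod_cast hord
      omega
  exact ⟨pow_eq_zero_iff two_ne_zero |>.mp (by simpa [hb] using h), hb⟩

theorem whitney_umbrella_ball_in_singular_locus_general (i : ℕ) (hi : 1 ≤ i)
    (ψ : Fin 3 → PowerSeries ℂ)
    -- `ψ` is an arc on `X = {z₁² - z₂ z₃² = 0}`
    (hψX : ψ 0 ^ 2 - ψ 1 * ψ 2 ^ 2 = 0)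
    -- `ψ` lies in the ball `B_{X,i}(φ)`
    (hball : (i : ℕ∞) < aOrd ψ umbrellaArc) :
    -- the image of `ψ` is contained in the singular locus `{z₁ = z₃ = 0}`;
    -- in particular `ψ ∉ R_{(X,0)}`, so `B_{X,i}(φ) ∩ R_{(X,0)} = ∅`
    ψ 0 = 0 ∧ ψ 2 = 0 := by
  have hψ1 : (ψ 1).order = 1 := by
    apply order_eq_one_of_one_lt_order_sub_X
    have hi' : (1 : ℕ∞) ≤ i := by exact_mod_cast hi
    exact hi'.trans_lt (hball.trans_le (aOrd_le_order_sub ψ umbrellaArc 1))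
  exact eq_zero_of_sq_eq_mul_sq hψ1 (sub_eq_zero.mp hψX)

theorem whitney_umbrella_ball_in_singular_locus (i : ℕ) (hi : 1 ≤ i)
    (ψ : Fin 3 → PowerSeries ℂ)
    (hψ0 : ∀ j, PowerSeries.constantCoeff (ψ j) = 0)
    -- `ψ` is an arc on `X = {z₁² - z₂ z₃² = 0}`
    (hψX : ψ 0 ^ 2 - ψ 1 * ψ 2 ^ 2 = 0)
    -- `ψ` lies in the ball `B_{X,i}(φ)`
    (hball : (i : ℕ∞) < aOrd ψ umbrellaArc) :
    -- the image of `ψ` is contained in the singular locus `{z₁ = z₃ = 0}`;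
    -- in particular `ψ ∉ R_{(X,0)}`, so `B_{X,i}(φ) ∩ R_{(X,0)} = ∅`
    ψ 0 = 0 ∧ ψ 2 = 0 :=
  whitney_umbrella_ball_in_singular_locus_general i hi ψ hψX hball
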